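/- For any symmetric-parametrization list 𝒫 and any natural number k, one has M(𝒫)^{2^k − 1}·M(𝒫⁺) ≤ M((𝒫^{−^k})⁺) ≤ M(𝒫⁺)^{2^k}, where 𝒫^{−^k} denotes the k-fold minus transform. -/

import Mathlib

open Finset
open scoped Classical

noncomputable section

/-- The value `M(P) = ∑ v, μ v * |θ v|` of a symmetric-parametrization list
`P = ((μ v, θ v))_v`. -/
def Mval {V : Type*} [Fintype V] (μ θ : V → ℝ) : ℝ := ∑ v, μ v * |θ v|

/-- Weights of the minus transform `P⁻`. -/
def minusμ {V : Type*} (μ : V → ℝ) : V × V → ℝ := fun p => μ p.1 * μ p.2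

/-- Parameters of the minus transform `P⁻`. -/
def minusθ {V : Type*} (θ : V → ℝ) : V × V → ℝ := fun p => θ p.1 * θ p.2

/-- The sign `∓ᵤ` : `-1` when `u = 1` (`true`), `+1` when `u = 0` (`false`). -/
def sgn : Bool → ℝ := fun u => if u then -1 else 1

/-- Weights of the plus transform `P⁺`
(when `1 ∓ᵤ θ₀ θ₁ = 0` the formula yields `0`, matching the convention that the
entry is then `(0, 0)`). -/
def plusμ {V : Type*} (μ θ : V → ℝ) : Bool × V × V → ℝ :=
  fun p => μ p.2.1 * μ p.2.2 * (1 + sgn p.1 * (θ p.2.1 * θ p.2.2)) / 2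

/-- Parameters of the plus transform `P⁺`
(division by zero is `0` in Lean, matching the convention that the entry is
`(0, 0)` when `1 ∓ᵤ θ₀ θ₁ = 0`). -/
def plusθ {V : Type*} (θ : V → ℝ) : Bool × V × V → ℝ :=
  fun p => (θ p.2.2 + sgn p.1 * θ p.2.1) / (1 + sgn p.1 * (θ p.2.1 * θ p.2.2))

/-- Index type of the `k`-fold minus transform. -/
def iterIdx (V : Type*) : ℕ → Type _ := fun k => Nat.rec V (fun _ T => T × T) k

instance iterIdxFintype (V : Type*) [Fintype V] : ∀ k, Fintype (iterIdx V k)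
  | 0 => inferInstanceAs (Fintype V)
  | (k+1) => letI := iterIdxFintype V k
             inferInstanceAs (Fintype (iterIdx V k × iterIdx V k))

/-- Weights of the `k`-fold minus transform `P^{-^k}`. -/
def iterMinusμ {V : Type*} (μ : V → ℝ) : (k : ℕ) → iterIdx V k → ℝ
  | 0 => μ
  | (k+1) => minusμ (iterMinusμ μ k)

/-- Parameters of the `k`-fold minus transform `P^{-^k}`. -/
def iterMinusθ {V : Type*} (θ : V → ℝ) : (k : ℕ) → iterIdx V k → ℝ
  | 0 => θ
  | (k+1) => minusθ (iterMinusθ θ k)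

/-!
For `|θ| ≤ 1` the two plus-children of a pair `(v₀, v₁)` carry together
`μ₀ μ₁ (|θ₁ + θ₀| + |θ₁ - θ₀|) / 2 = μ₀ μ₁ max |θ₀| |θ₁|`, so
`M(𝒫⁺) = G(𝒫) := ∑ μ₀ μ₁ max |θ₀| |θ₁|` (`maxSum`). Indexing `G(𝒫⁻)` by quadruples
`((a, c), (b, d))`, the bound `G(𝒫⁻) ≤ G(𝒫)²` holds termwise by `max (xy) (zw) ≤ max x z * max y w`,
and `M(𝒫) G(𝒫) ≤ G(𝒫⁻)` holds after symmetrising in `a ↔ c`, by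
`(x + z) max y w ≤ max (xy) (zw) + max (zy) (xw)`. As `M(𝒫⁻) = M(𝒫)²`, induction on `k` gives
both bounds.
-/

def maxSum {V : Type*} [Fintype V] (μ θ : V → ℝ) : ℝ :=
  ∑ p : V × V, μ p.1 * μ p.2 * max |θ p.1| |θ p.2|

lemma maxSum_nonneg {V : Type*} [Fintype V] {μ : V → ℝ} (θ : V → ℝ) (hμ : ∀ v, 0 ≤ μ v) :
    0 ≤ maxSum μ θ :=
  Finset.sum_nonneg fun p _ =>
    mul_nonneg (mul_nonneg (hμ p.1) (hμ p.2)) ((abs_nonneg _).trans (le_max_left _ _))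

lemma abs_add_add_abs_sub_eq_two_mul_max (a b : ℝ) : |a + b| + |a - b| = 2 * max |a| |b| := by
  rcases abs_cases (a + b) with ⟨h₁, _⟩ | ⟨h₁, _⟩ <;>
  rcases abs_cases (a - b) with ⟨h₂, _⟩ | ⟨h₂, _⟩ <;>
  rcases max_cases |a| |b| with ⟨h₃, _⟩ | ⟨h₃, _⟩ <;>
  rcases abs_cases a with ⟨h₄, _⟩ | ⟨h₄, _⟩ <;>
  rcases abs_cases b with ⟨h₅, _⟩ | ⟨h₅, _⟩ <;>
  linarith

lemma add_mul_max_le_max_add_max (x y z w : ℝ) :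
    (x + z) * max y w ≤ max (x * y) (z * w) + max (z * y) (x * w) := by
  rcases le_total y w with h | h
  · rw [max_eq_right h]
    linarith [le_max_right (x * y) (z * w), le_max_right (z * y) (x * w)]
  · rw [max_eq_left h]
    linarith [le_max_left (x * y) (z * w), le_max_left (z * y) (x * w)]

lemma one_add_mul_mul_abs_div {x y : ℝ} (hx : |x| ≤ 1) (hy : |y| ≤ 1) :
    (1 + x * y) * |(y + x) / (1 + x * y)| = |y + x| := by
  obtain ⟨hx₁, hx₂⟩ := abs_le.mp hx
  obtain ⟨hy₁, hy₂⟩ := abs_le.mp hy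
  rcases (show 0 ≤ 1 + x * y by nlinarith).eq_or_lt with h | h
  · -- `1 + x y = 0` forces `x = -y`, so the division by zero is harmless
    have hxy : y + x = 0 := by nlinarith [sq_nonneg (y + x)]
    rw [← h, hxy]
    simp
  · rw [abs_div, abs_of_pos h, mul_div_cancel₀ _ h.ne']

lemma Fintype.sum_le_sum_of_add_comp_equiv_le {ι : Type*} [Fintype ι] (e : ι ≃ ι)
    {f g : ι → ℝ} (h : ∀ x, f x + f (e x) ≤ g x + g (e x)) : ∑ x, f x ≤ ∑ x, g x := by
  have hsum := Finset.sum_le_sum fun x (_ : x ∈ Finset.univ) => h x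
  rw [Finset.sum_add_distrib, Finset.sum_add_distrib, Equiv.sum_comp, Equiv.sum_comp] at hsum
  linarith

section Plus

variable {V : Type*} (μ θ : V → ℝ)

lemma plusμ_mul_abs_plusθ (hθ : ∀ v, |θ v| ≤ 1) (u : Bool) (a b : V) :
    plusμ μ θ (u, a, b) * |plusθ θ (u, a, b)| = μ a * μ b * |θ b + sgn u * θ a| / 2 := by
  have hsgn : |sgn u * θ a| ≤ 1 := by cases u <;> simpa [sgn] using hθ a
  have key : (1 + sgn u * (θ a * θ b)) * |(θ b + sgn u * θ a) / (1 + sgn u * (θ a * θ b))|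
      = |θ b + sgn u * θ a| := by
    rw [← mul_assoc]
    exact one_add_mul_mul_abs_div hsgn (hθ b)
  simp only [plusμ, plusθ]
  rw [← key]
  ring

lemma Mval_plus_eq_maxSum [Fintype V] (hθ : ∀ v, |θ v| ≤ 1) :
    Mval (plusμ μ θ) (plusθ θ) = maxSum μ θ := by
  rw [Mval, Fintype.sum_prod_type, Fintype.sum_bool, ← Finset.sum_add_distrib, maxSum]
  refine Finset.sum_congr rfl fun p _ => ?_
  rw [plusμ_mul_abs_plusθ μ θ hθ, plusμ_mul_abs_plusθ μ θ hθ, max_comm]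
  simp only [sgn, if_true, Bool.false_eq_true, if_false, neg_one_mul, one_mul, ← sub_eq_add_neg]
  linear_combination (μ p.1 * μ p.2 / 2) * abs_add_add_abs_sub_eq_two_mul_max (θ p.2) (θ p.1)

end Plus

section Minus

variable {V : Type*} {μ : V → ℝ} (θ : V → ℝ)

lemma minusμ_nonneg (hμ : ∀ v, 0 ≤ μ v) (p : V × V) : 0 ≤ minusμ μ p :=
  mul_nonneg (hμ p.1) (hμ p.2)

lemma abs_minusθ_le_one {θ : V → ℝ} (hθ : ∀ v, |θ v| ≤ 1) (p : V × V) : |minusθ θ p| ≤ 1 := by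
  rw [minusθ, abs_mul]
  exact mul_le_one₀ (hθ p.1) (abs_nonneg _) (hθ p.2)

variable [Fintype V]

lemma sum_minusμ (hsum : ∑ v, μ v = 1) : ∑ p, minusμ μ p = 1 := by
  simp only [minusμ, Fintype.sum_prod_type, ← Finset.mul_sum, hsum, mul_one]

variable (μ) in
lemma Mval_minus : Mval (minusμ μ) (minusθ θ) = Mval μ θ ^ 2 := by
  simp only [Mval, minusμ, minusθ, sq, Fintype.sum_mul_sum, Fintype.sum_prod_type, abs_mul]
  exact Finset.sum_congr rfl fun _ _ => Finset.sum_congr rfl fun _ _ => by ring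

variable (μ) in
lemma maxSum_minus_eq : maxSum (minusμ μ) (minusθ θ) =
    ∑ x : (V × V) × V × V, μ x.1.1 * μ x.1.2 * (μ x.2.1 * μ x.2.2) *
      max (|θ x.1.1| * |θ x.2.1|) (|θ x.1.2| * |θ x.2.2|) := by
  rw [maxSum, ← (Equiv.prodProdProdComm V V V V).sum_comp]
  refine Finset.sum_congr rfl fun x _ => ?_
  simp only [minusμ, minusθ, Equiv.prodProdProdComm_apply, abs_mul]
  ring

lemma maxSum_minus_le_sq (hμ : ∀ v, 0 ≤ μ v) :
    maxSum (minusμ μ) (minusθ θ) ≤ maxSum μ θ ^ 2 := by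
  rw [maxSum_minus_eq, sq, maxSum, Fintype.sum_mul_sum, ← Fintype.sum_prod_type']
  refine Finset.sum_le_sum fun x _ => ?_
  have hmax := max_mul_mul_le_max_mul_max (|θ x.2.1|) (|θ x.1.2|)
    (abs_nonneg (θ x.1.1)) (abs_nonneg (θ x.2.2))
  rw [mul_comm |θ x.2.2|, max_comm |θ x.2.2|] at hmax
  have hw : 0 ≤ μ x.1.1 * μ x.1.2 * (μ x.2.1 * μ x.2.2) :=
    mul_nonneg (mul_nonneg (hμ _) (hμ _)) (mul_nonneg (hμ _) (hμ _))
  calc _ ≤ μ x.1.1 * μ x.1.2 * (μ x.2.1 * μ x.2.2) *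
        (max |θ x.1.1| |θ x.1.2| * max |θ x.2.1| |θ x.2.2|) := by gcongr
    _ = _ := by ring

lemma Mval_mul_maxSum_le_maxSum_minus (hμ : ∀ v, 0 ≤ μ v) (hsum : ∑ v, μ v = 1) :
    Mval μ θ * maxSum μ θ ≤ maxSum (minusμ μ) (minusθ θ) := by
  have hMval : Mval μ θ = ∑ p : V × V, μ p.1 * μ p.2 * |θ p.1| := by
    simp only [Mval, Fintype.sum_prod_type, mul_right_comm (μ _) (μ _), ← Finset.mul_sum, hsum,
      mul_one]
  rw [maxSum_minus_eq, hMval, maxSum, Fintype.sum_mul_sum, ← Fintype.sum_prod_type']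
  refine Fintype.sum_le_sum_of_add_comp_equiv_le
    ((Equiv.prodComm V V).prodCongr (Equiv.refl (V × V))) fun x => ?_
  have hw : 0 ≤ μ x.1.1 * μ x.1.2 * (μ x.2.1 * μ x.2.2) :=
    mul_nonneg (mul_nonneg (hμ _) (hμ _)) (mul_nonneg (hμ _) (hμ _))
  have key := mul_le_mul_of_nonneg_left
    (add_mul_max_le_max_add_max |θ x.1.1| |θ x.2.1| |θ x.1.2| |θ x.2.2|) hw
  simp only [Equiv.prodCongr_apply, Equiv.coe_prodComm, Prod.map_fst, Prod.map_snd,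
    Prod.fst_swap, Prod.snd_swap, Equiv.refl_apply]
  linarith

end Minus

section IterMinus

variable {V : Type*} {μ : V → ℝ} (θ : V → ℝ)

lemma iterMinusμ_nonneg (hμ : ∀ v, 0 ≤ μ v) (k : ℕ) (w : iterIdx V k) : 0 ≤ iterMinusμ μ k w := by
  induction k with
  | zero => exact hμ w
  -- `(V := iterIdx V k)` keeps `iterIdx V (k + 1)` folded as a product, so that its `Fintype`
  -- instance is found
  | succ k ih => exact minusμ_nonneg (V := iterIdx V k) ih w

lemma abs_iterMinusθ_le_one {θ : V → ℝ} (hθ : ∀ v, |θ v| ≤ 1) (k : ℕ) (w : iterIdx V k) :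
    |iterMinusθ θ k w| ≤ 1 := by
  induction k with
  | zero => exact hθ w
  | succ k ih => exact abs_minusθ_le_one (V := iterIdx V k) ih w

variable [Fintype V]

lemma sum_iterMinusμ (hsum : ∑ v, μ v = 1) (k : ℕ) : ∑ w, iterMinusμ μ k w = 1 := by
  induction k with
  | zero => exact hsum
  | succ k ih => exact sum_minusμ (V := iterIdx V k) ih

variable (μ) in
lemma Mval_iterMinus (k : ℕ) : Mval (iterMinusμ μ k) (iterMinusθ θ k) = Mval μ θ ^ 2 ^ k := by
  induction k with
  | zero => exact (pow_one _).symm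
  | succ k ih =>
    rw [pow_succ, pow_mul, ← ih]
    exact Mval_minus (V := iterIdx V k) _ _

lemma maxSum_iterMinus_le (hμ : ∀ v, 0 ≤ μ v) (k : ℕ) :
    maxSum (iterMinusμ μ k) (iterMinusθ θ k) ≤ maxSum μ θ ^ 2 ^ k := by
  induction k with
  | zero => exact (pow_one _).ge
  | succ k ih =>
    have := maxSum_nonneg (iterMinusθ θ k) (iterMinusμ_nonneg hμ k)
    calc maxSum (iterMinusμ μ (k + 1)) (iterMinusθ θ (k + 1))
        ≤ maxSum (iterMinusμ μ k) (iterMinusθ θ k) ^ 2 :=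
          maxSum_minus_le_sq (V := iterIdx V k) _ (iterMinusμ_nonneg hμ k)
      _ ≤ (maxSum μ θ ^ 2 ^ k) ^ 2 := by gcongr
      _ = maxSum μ θ ^ 2 ^ (k + 1) := by rw [← pow_mul, pow_succ]

lemma Mval_pow_mul_maxSum_le_maxSum_iterMinus (hμ : ∀ v, 0 ≤ μ v) (hsum : ∑ v, μ v = 1)
    (k : ℕ) : Mval μ θ ^ (2 ^ k - 1) * maxSum μ θ ≤ maxSum (iterMinusμ μ k) (iterMinusθ θ k) := by
  induction k with
  | zero => exact (one_mul _).le
  | succ k ih =>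
    have hM : 0 ≤ Mval μ θ :=
      Finset.sum_nonneg fun v _ => mul_nonneg (hμ v) (abs_nonneg _)
    have hexp : 2 ^ (k + 1) - 1 = 2 ^ k + (2 ^ k - 1) := by
      have := Nat.one_le_two_pow (n := k)
      rw [pow_succ]
      omega
    calc Mval μ θ ^ (2 ^ (k + 1) - 1) * maxSum μ θ
        = Mval μ θ ^ 2 ^ k * (Mval μ θ ^ (2 ^ k - 1) * maxSum μ θ) := by
          rw [hexp, pow_add, mul_assoc]
      _ ≤ Mval (iterMinusμ μ k) (iterMinusθ θ k) * maxSum (iterMinusμ μ k) (iterMinusθ θ k) := by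
          rw [Mval_iterMinus]
          gcongr
      _ ≤ maxSum (iterMinusμ μ (k + 1)) (iterMinusθ θ (k + 1)) :=
          Mval_mul_maxSum_le_maxSum_minus (V := iterIdx V k) _ (iterMinusμ_nonneg hμ k)
            (sum_iterMinusμ hsum k)

end IterMinus

theorem stmt15 {V : Type*} [Fintype V] (μ θ : V → ℝ)
    (hμ : ∀ v, 0 ≤ μ v) (hsum : ∑ v, μ v = 1) (hθ : ∀ v, θ v ∈ Set.Icc (-1 : ℝ) 1) (k : ℕ) :
    Mval μ θ ^ (2 ^ k - 1) * Mval (plusμ μ θ) (plusθ θ)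
      ≤ Mval (plusμ (iterMinusμ μ k) (iterMinusθ θ k)) (plusθ (iterMinusθ θ k))
    ∧ Mval (plusμ (iterMinusμ μ k) (iterMinusθ θ k)) (plusθ (iterMinusθ θ k))
      ≤ (Mval (plusμ μ θ) (plusθ θ)) ^ (2 ^ k) := by
  have habs : ∀ v, |θ v| ≤ 1 := fun v => abs_le.mpr (hθ v)
  rw [Mval_plus_eq_maxSum μ θ habs,
    Mval_plus_eq_maxSum _ _ (abs_iterMinusθ_le_one habs k)]
  exact ⟨Mval_pow_mul_maxSum_le_maxSum_iterMinus θ hμ hsum k, maxSum_iterMinus_le θ hμ k⟩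

end
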